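/- Suppose in a commutative ring elements x₁,…,x_{n+1}, X_{(0,1)},…,X_{(n−1,1)}, y_j, z_j satisfy x_j X_{(j−1,1)} = x_{j−1} y_j + x_{j+1} z_j for all j (with x₀ = 1). Then z₁⋯z_{j−1} x_j equals the j×j determinant of the tridiagonal matrix with first row (x₁, y₁, 0,…), subdiagonal entries 1, z₁,…,z_{j−2}, diagonal x₁, X_{(0,1)},…,X_{(j−2,1)} and superdiagonal y₁,…,y_{j−1}. -/
import Mathlib

def triMatB {R : Type} [CommRing R] (x₁ : R) (X y z : ℕ → R) (j : ℕ) :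
    Matrix (Fin j) (Fin j) R := fun k l =>
  if (k : ℕ) = l then (if (k : ℕ) = 0 then x₁ else X ((k : ℕ) - 1))
  else if (l : ℕ) = (k : ℕ) + 1 then y ((k : ℕ) + 1)
  else if (k : ℕ) = (l : ℕ) + 1 then (if (l : ℕ) = 0 then 1 else z l)
  else 0

lemma val_succAbove {n : ℕ} (p : Fin (n+1)) (i : Fin n) :
    ((p.succAbove i : Fin (n+1)) : ℕ) = if (i:ℕ) < (p:ℕ) then (i:ℕ) else (i:ℕ)+1 := by
  rw [Fin.succAbove]
  split_ifs with h h' h'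
  · rfl
  · exact absurd h (by simpa [Fin.lt_def] using h')
  · exact absurd h' (by simpa [Fin.lt_def] using h)
  · rfl

lemma triMatB_sub {R : Type} [CommRing R] (x₁ : R) (X y z : ℕ → R) (m : ℕ) :
    (triMatB x₁ X y z (m+1)).submatrix Fin.castSucc Fin.castSucc
      = triMatB x₁ X y z m := by
  ext k l
  simp [triMatB, Matrix.submatrix_apply]

lemma tri_rec {R : Type} [CommRing R] (x₁ : R) (X y z : ℕ → R) (n : ℕ) :
    (triMatB x₁ X y z (n+3)).det
      = X (n+1) * (triMatB x₁ X y z (n+2)).det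
        - z (n+1) * y (n+2) * (triMatB x₁ X y z (n+1)).det := by
  set M := triMatB x₁ X y z (n+3) with hM
  rw [Matrix.det_succ_row M (Fin.last (n+2)), Fin.sum_univ_castSucc, Fin.sum_univ_castSucc]
  have h0 : ∀ j : Fin (n+1),
      (-1:R) ^ ((Fin.last (n+2) : ℕ) + ((j.castSucc.castSucc : Fin (n+3)) : ℕ))
        * M (Fin.last (n+2)) j.castSucc.castSucc
        * (M.submatrix (Fin.last (n+2)).succAbove (j.castSucc.castSucc).succAbove).det = 0 := by
    intro j
    have hent : M (Fin.last (n+2)) j.castSucc.castSucc = 0 := by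
      have hj : (j:ℕ) < n + 1 := j.isLt
      simp only [hM, triMatB, Fin.val_last, Fin.coe_castSucc]
      split_ifs <;> first | rfl | omega | (exact ‹False›.elim) | (exact absurd trivial ‹¬True›) | (congr 1 <;> omega)
    rw [hent, mul_zero, zero_mul]
  rw [Finset.sum_eq_zero (fun j _ => h0 j), zero_add]
  -- diagonal term
  have hdiag : M (Fin.last (n+2)) (Fin.last (n+2)) = X (n+1) := by
    simp only [hM, triMatB, Fin.val_last]
    split_ifs <;> first | rfl | omega | (exact ‹False›.elim) | (exact absurd trivial ‹¬True›) | (congr 1 <;> omega)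
  have hdmin : (M.submatrix (Fin.last (n+2)).succAbove (Fin.last (n+2)).succAbove).det
      = (triMatB x₁ X y z (n+2)).det := by
    rw [Fin.succAbove_last, hM, triMatB_sub]
  -- off-diagonal term
  have hoff : M (Fin.last (n+2)) ((Fin.last (n+1)).castSucc) = z (n+1) := by
    simp only [hM, triMatB, Fin.val_last, Fin.coe_castSucc]
    split_ifs <;> first | rfl | omega | (exact ‹False›.elim) | (exact absurd trivial ‹¬True›) | (congr 1 <;> omega)
  set N := M.submatrix (Fin.last (n+2)).succAbove ((Fin.last (n+1)).castSucc : Fin (n+3)).succAbove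
    with hN
  have hNdet : N.det = y (n+2) * (triMatB x₁ X y z (n+1)).det := by
    rw [Matrix.det_succ_column N (Fin.last (n+1)), Fin.sum_univ_castSucc]
    have hz : ∀ i : Fin (n+1),
        (-1:R) ^ (((i.castSucc : Fin (n+2)) : ℕ) + ((Fin.last (n+1) : ℕ)))
          * N i.castSucc (Fin.last (n+1))
          * (N.submatrix (i.castSucc).succAbove (Fin.last (n+1)).succAbove).det = 0 := by
      intro i
      have hent : N i.castSucc (Fin.last (n+1)) = 0 := by
        have hi : (i:ℕ) < n + 1 := i.isLt
        simp only [hN, hM, Matrix.submatrix_apply, triMatB, Fin.succAbove_last,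
          Fin.coe_castSucc, val_succAbove, Fin.val_last]
        split_ifs <;> first | rfl | omega | (exact ‹False›.elim) | (exact absurd trivial ‹¬True›) | (congr 1 <;> omega)
      rw [hent, mul_zero, zero_mul]
    rw [Finset.sum_eq_zero (fun i _ => hz i), zero_add]
    have hent : N (Fin.last (n+1)) (Fin.last (n+1)) = y (n+2) := by
      simp only [hN, hM, Matrix.submatrix_apply, triMatB, Fin.succAbove_last,
        Fin.coe_castSucc, val_succAbove, Fin.val_last]
      split_ifs <;> first | rfl | omega | (exact ‹False›.elim) | (exact absurd trivial ‹¬True›) | (congr 1 <;> omega)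
    have hmin : (N.submatrix (Fin.last (n+1)).succAbove (Fin.last (n+1)).succAbove)
        = triMatB x₁ X y z (n+1) := by
      ext k l
      have hk : (k:ℕ) < n + 1 := k.isLt
      have hl : (l:ℕ) < n + 1 := l.isLt
      simp only [hN, hM, Matrix.submatrix_apply, triMatB, Fin.succAbove_last,
        Fin.coe_castSucc, val_succAbove, Fin.val_last]
      rw [if_pos hl]
    rw [hent, hmin, Fin.val_last,
      show ((n+1) + (n+1) : ℕ) = 2*(n+1) by ring, pow_mul]
    simp
  rw [hdiag, hdmin, hoff, hNdet]
  simp only [Fin.val_last, Fin.coe_castSucc]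
  rw [show ((n+2) + (n+1) : ℕ) = 2*(n+1) + 1 by ring,
    show ((n+2) + (n+2) : ℕ) = 2*(n+2) by ring, pow_mul, pow_succ, pow_mul]
  ring

/-- suppose in a commutative ring elements `x_j`, `X_{(j−1,1)}`, `y_j`, `z_j`
satisfy `x_j X_{(j−1,1)} = x_{j−1} y_j + x_{j+1} z_j` for all `j ≥ 1`, with `x₀ = 1`.
Then `z₁⋯z_{j−1} x_j` equals the `j×j` determinant of the tridiagonal matrix with diagonal
`x₁, X_{(0,1)},…,X_{(j−2,1)}`, subdiagonal `1, z₁,…,z_{j−2}`, superdiagonal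
`y₁,…,y_{j−1}`. -/
theorem stmt_9 {R : Type} [CommRing R] (x X y z : ℕ → R) (hx0 : x 0 = 1)
    (hrel : ∀ j, 1 ≤ j → x j * X (j - 1) = x (j - 1) * y j + x (j + 1) * z j) :
    ∀ j, 1 ≤ j →
      (∏ t ∈ Finset.Icc 1 (j - 1), z t) * x j = (triMatB (x 1) X y z j).det := by
  have key : ∀ j, (∏ t ∈ Finset.Icc 1 j, z t) * x (j+1)
      = (triMatB (x 1) X y z (j+1)).det := by
    intro j
    induction j using Nat.strong_induction_on with
    | _ j ih =>
      match j with
      | 0 =>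
        simp [Matrix.det_fin_one, triMatB]
      | 1 =>
        rw [Matrix.det_fin_two]
        simp only [triMatB]
        norm_num
        have h1 := hrel 1 le_rfl
        norm_num [hx0] at h1
        linear_combination -h1
      | (m+2) =>
        rw [tri_rec]
        rw [← ih (m+1) (by omega), ← ih m (by omega)]
        have h1 := hrel (m+2) (by omega)
        rw [show m+2-1 = m+1 by omega, show m+2+1 = m+3 by omega] at h1
        have hprod2 : (∏ t ∈ Finset.Icc 1 (m+2), z t)
            = (∏ t ∈ Finset.Icc 1 (m+1), z t) * z (m+2) := by
          rw [← Finset.prod_Icc_succ_top (by omega)]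
        have hprod1 : (∏ t ∈ Finset.Icc 1 (m+1), z t)
            = (∏ t ∈ Finset.Icc 1 m, z t) * z (m+1) := by
          rw [← Finset.prod_Icc_succ_top (by omega)]
        rw [hprod2, hprod1, show m+2+1 = m+3 by omega, show m+1+1 = m+2 by omega]
        linear_combination (-(∏ t ∈ Finset.Icc 1 m, z t) * z (m+1)) * h1
  intro j hj
  obtain ⟨k, rfl⟩ : ∃ k, j = k + 1 := ⟨j - 1, by omega⟩
  simpa using key k
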